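/- arXiv:2605.07834 — 3 statements merged into one kernel-verified Lean document; each statement's English description precedes it below -/
import Mathlib

section
/- Under the conditions of the previous statement, if additionally π ≥ c·p and 1 - π ≥ c·(1-p) for some c > 0 and δ ∈ [δ_ℓ, δ_u] with δ_ℓ > 0, then |dω/dδ| ≤ 2 / (c · min(1, δ_ℓ)²). -/
/-- Uniform bound on the δ-derivative of the weight ω. -/
theorem weight_deriv_bound (w p π c δ δℓ δu : ℝ) (hw : w = 0 ∨ w = 1)
    (hp : p ∈ Set.Ioo (0:ℝ) 1) (hπ : π ∈ Set.Ioo (0:ℝ) 1)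
    (hc : 0 < c) (ho1 : c * p ≤ π) (ho2 : c * (1 - p) ≤ 1 - π)
    (hδℓ : 0 < δℓ) (hδ : δ ∈ Set.Icc δℓ δu) :
    |(p * (1 - p) / (δ * p + 1 - p) ^ 2) * (w / π - (1 - w) / (1 - π))| ≤
      2 / (c * (min 1 δℓ) ^ 2) := by
  obtain ⟨hp0, hp1⟩ := hp
  obtain ⟨hπ0, hπ1⟩ := hπ
  obtain ⟨hδl, hδu⟩ := hδ
  set m := min 1 δℓ with hmdef
  have hm0 : 0 < m := lt_min one_pos hδℓ
  have hm1 : m ≤ 1 := min_le_left _ _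
  have hmδ : m ≤ δ := le_trans (min_le_right _ _) hδl
  have hD : m ≤ δ * p + 1 - p := by nlinarith
  have hD0 : 0 < δ * p + 1 - p := lt_of_lt_of_le hm0 hD
  have hsq : m ^ 2 ≤ (δ * p + 1 - p) ^ 2 := by nlinarith
  have hp1' : (0:ℝ) ≤ 1 - p := by linarith
  have hpp : 0 ≤ p * (1 - p) := mul_nonneg hp0.le hp1'
  have h1 : |p * (1 - p) / (δ * p + 1 - p) ^ 2| ≤ p * (1 - p) / m ^ 2 := by
    rw [abs_of_nonneg (div_nonneg hpp (by positivity))]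
    exact div_le_div_of_nonneg_left hpp (by positivity) hsq
  rw [abs_mul]
  rcases hw with hw | hw <;> subst hw
  · have h2 : |(0:ℝ) / π - (1 - 0) / (1 - π)| ≤ 1 / (c * (1 - p)) := by
      rw [zero_div, zero_sub, abs_neg, sub_zero,
        abs_of_nonneg (div_nonneg zero_le_one (by linarith))]
      apply one_div_le_one_div_of_le (mul_pos hc (by linarith)) ho2
    calc |p * (1 - p) / (δ * p + 1 - p) ^ 2| * |(0:ℝ) / π - (1 - 0) / (1 - π)|
        ≤ (p * (1 - p) / m ^ 2) * (1 / (c * (1 - p))) :=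
          mul_le_mul h1 h2 (abs_nonneg _) (div_nonneg hpp (by positivity))
      _ ≤ 2 / (c * m ^ 2) := by
          rw [div_mul_div_comm,
            div_le_div_iff₀ (mul_pos (by positivity) (mul_pos hc (by linarith))) (by positivity)]
          nlinarith [mul_nonneg (mul_nonneg (mul_nonneg (by linarith : (0:ℝ) ≤ 2 - p) hp1') hc.le) (sq_nonneg m)]
  · have h2 : |(1:ℝ) / π - (1 - 1) / (1 - π)| ≤ 1 / (c * p) := by
      rw [sub_self, zero_div, sub_zero, abs_of_nonneg (by positivity)]
      apply one_div_le_one_div_of_le (mul_pos hc hp0) ho1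
    calc |p * (1 - p) / (δ * p + 1 - p) ^ 2| * |(1:ℝ) / π - (1 - 1) / (1 - π)|
        ≤ (p * (1 - p) / m ^ 2) * (1 / (c * p)) :=
          mul_le_mul h1 h2 (abs_nonneg _) (div_nonneg hpp (by positivity))
      _ ≤ 2 / (c * m ^ 2) := by
          rw [div_mul_div_comm,
            div_le_div_iff₀ (mul_pos (by positivity) (mul_pos hc hp0)) (by positivity)]
          nlinarith [mul_nonneg (mul_nonneg (mul_nonneg (by linarith : (0:ℝ) ≤ 1 + p) hp0.le) hc.le) (sq_nonneg m)]
end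

section
/- Let W ∈ {0,1}, p, p̂, π, π̂ ∈ [0,1], δ ∈ [δ_ℓ, δ_u] with 0 < δ_ℓ, suppose π̂ ≥ c·p̂ and 1 - π̂ ≥ c·(1 - p̂) for some c > 0 (interpreting fractions with zero numerator and denominator as 0). Then (W·π + (1-W)(1-π)) / (W·π̂ + (1-W)(1-π̂)) · (δ·W·p̂ + (1-W)(1-p̂)) / (δp̂ + 1 - p̂) ≤ δ_u·c⁻¹/min(1,δ_ℓ) + c⁻¹/min(1,δ_ℓ), provided π ≤ 1. -/
/-- Boundedness of the product of a propensity-score ratio and an estimated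
incremental-intervention weight, under sample bounded relative overlap.
(Divisions with zero denominator are 0 by Lean's convention, matching 0/0 := 0.) -/
theorem ratio_weight_product_bound (W p ph π πh δ δℓ δu c : ℝ)
    (hW : W = 0 ∨ W = 1)
    (hp : p ∈ Set.Icc (0:ℝ) 1) (hph : ph ∈ Set.Icc (0:ℝ) 1)
    (hπ : π ∈ Set.Icc (0:ℝ) 1) (hπh : πh ∈ Set.Icc (0:ℝ) 1)
    (hδℓ : 0 < δℓ) (hδ : δ ∈ Set.Icc δℓ δu)
    (hc : 0 < c) (h1 : c * ph ≤ πh) (h2 : c * (1 - ph) ≤ 1 - πh) :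
    (W * π + (1 - W) * (1 - π)) / (W * πh + (1 - W) * (1 - πh)) *
        ((δ * W * ph + (1 - W) * (1 - ph)) / (δ * ph + 1 - ph)) ≤
      δu * c⁻¹ / min 1 δℓ + c⁻¹ / min 1 δℓ := by
  obtain ⟨hp0, hp1⟩ := hp
  obtain ⟨hph0, hph1⟩ := hph
  obtain ⟨hπ0, hπ1⟩ := hπ
  obtain ⟨hπh0, hπh1⟩ := hπh
  obtain ⟨hδl, hδu⟩ := hδ
  set m := min 1 δℓ with hm
  have hm0 : 0 < m := lt_min one_pos hδℓ
  have hmδ : m ≤ δ := le_trans (min_le_right _ _) hδl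
  have hm1 : m ≤ 1 := min_le_left _ _
  have hδ0 : 0 < δ := lt_of_lt_of_le hδℓ hδl
  have hδu0 : 0 < δu := lt_of_lt_of_le hδ0 hδu
  have hdenom : m ≤ δ * ph + 1 - ph := by nlinarith
  have hdenom0 : 0 < δ * ph + 1 - ph := lt_of_lt_of_le hm0 hdenom
  have hA : (0:ℝ) ≤ δu * c⁻¹ / m := by positivity
  have hB : (0:ℝ) ≤ c⁻¹ / m := by positivity
  rcases hW with h | h <;> subst h
  · -- W = 0
    simp only [zero_mul, one_mul, mul_zero, zero_add, sub_zero, mul_one]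
    have key : (1 - π) / (1 - πh) * ((1 - ph) / (δ * ph + 1 - ph)) ≤ c⁻¹ / m := by
      rcases eq_or_lt_of_le hπh1 with h | h
      · rw [h]; simp [hB]
      · have hπh' : 0 < 1 - πh := by linarith
        rcases eq_or_lt_of_le hph1 with h' | h'
        · rw [h']; simp [hB]
        · have hph2 : 0 < 1 - ph := by linarith
          calc (1 - π) / (1 - πh) * ((1 - ph) / (δ * ph + 1 - ph))
              ≤ 1 / (c * (1 - ph)) * ((1 - ph) / m) := by
                apply mul_le_mul
                · exact div_le_div₀ zero_le_one (by linarith) (by positivity) h2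
                · exact div_le_div_of_nonneg_left (by linarith) hm0 hdenom
                · positivity
                · positivity
            _ = c⁻¹ / m := by
                field_simp
    linarith
  · -- W = 1
    simp only [one_mul, mul_one, sub_self, zero_mul, mul_zero, add_zero, zero_add]
    have key : π / πh * (δ * ph / (δ * ph + 1 - ph)) ≤ δu * c⁻¹ / m := by
      rcases eq_or_lt_of_le hπh0 with h | h
      · rw [← h]; simp [hA]
      · rcases eq_or_lt_of_le hph0 with h' | h'
        · rw [← h']; simp [hA]
        · calc π / πh * (δ * ph / (δ * ph + 1 - ph))
              ≤ 1 / (c * ph) * (δu * ph / m) := by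
                apply mul_le_mul
                · exact div_le_div₀ zero_le_one hπ1 (by positivity) h1
                · refine le_trans (div_le_div_of_nonneg_left (by positivity) hm0 hdenom) ?_
                  gcongr
                · positivity
                · positivity
            _ = δu * c⁻¹ / m := by
                field_simp
    linarith
end

section
/- Let p, p̂, π, π̂ ∈ [0,1] with π ≤ 1, δ ∈ [δ_ℓ, δ_u], 0 < δ_ℓ, and suppose π̂ ≥ c·p̂ and 1 - π̂ ≥ c·(1 - p̂) for c > 0. Then for W ∈ {0,1} (with 0/0 := 0): [(2W − 1)/(W·π̂ + (1-W)(1-π̂))] · [(δ·W·p̂ + (1-W)(1-p̂))/(δp̂ + 1 - p̂)] has absolute value at most (δ_u + 1)/(c·min(1, δ_ℓ)). -/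
/-- Bound on the multiplier of the propensity-score estimation error.
(Divisions with zero denominator are 0 by Lean's convention, matching 0/0 := 0.) -/
theorem error_multiplier_bound (W p ph π πh δ δℓ δu c : ℝ) (hW : W = 0 ∨ W = 1)
    (hp : p ∈ Set.Icc (0:ℝ) 1) (hph : ph ∈ Set.Icc (0:ℝ) 1)
    (hπ : π ≤ 1) (hπh : πh ∈ Set.Icc (0:ℝ) 1)
    (hδℓ : 0 < δℓ) (hδ : δ ∈ Set.Icc δℓ δu)
    (hc : 0 < c) (h1 : c * ph ≤ πh) (h2 : c * (1 - ph) ≤ 1 - πh) :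
    |(2 * W - 1) / (W * πh + (1 - W) * (1 - πh)) *
        ((δ * W * ph + (1 - W) * (1 - ph)) / (δ * ph + 1 - ph))| ≤
      (δu + 1) / (c * min 1 δℓ) := by
  obtain ⟨hph0, hph1⟩ := hph
  obtain ⟨hδl, hδu⟩ := hδ
  set m := min 1 δℓ with hm
  have hm0 : 0 < m := lt_min one_pos hδℓ
  have hm1 : m ≤ 1 := min_le_left _ _
  have hmδ : m ≤ δℓ := min_le_right _ _
  have hδpos : 0 < δ := lt_of_lt_of_le hδℓ hδl
  have hδu0 : 0 < δu := lt_of_lt_of_le hδpos hδu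
  have hRHS : 0 ≤ (δu + 1) / (c * m) :=
    div_nonneg (by linarith) (le_of_lt (mul_pos hc hm0))
  have hD : m ≤ δ * ph + 1 - ph := by nlinarith
  have hDpos : 0 < δ * ph + 1 - ph := lt_of_lt_of_le hm0 hD
  rcases hW with h | h <;> subst h
  · -- W = 0
    rcases eq_or_lt_of_le hph1 with h1' | h1'
    · simp [h1']
      exact hRHS
    · have hπh0 : 0 < 1 - πh := lt_of_lt_of_le (mul_pos hc (by linarith)) h2
      have : (2 * 0 - 1) / (0 * πh + (1 - 0) * (1 - πh)) *
          ((δ * 0 * ph + (1 - 0) * (1 - ph)) / (δ * ph + 1 - ph))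
          = -((1 - ph) / ((1 - πh) * (δ * ph + 1 - ph))) := by
        field_simp
        rw [div_eq_iff (ne_of_gt (by linarith))]
        ring
      rw [this, abs_neg, abs_of_nonneg (div_nonneg (by linarith)
        (le_of_lt (mul_pos hπh0 hDpos)))]
      rw [div_le_div_iff₀ (mul_pos hπh0 hDpos) (mul_pos hc hm0)]
      nlinarith [mul_le_mul h2 hD (le_of_lt hm0) (le_of_lt hπh0),
        mul_pos hπh0 hDpos, mul_le_mul_of_nonneg_right (le_of_lt hδu0)
          (le_of_lt (mul_pos hπh0 hDpos))]
  · -- W = 1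
    rcases eq_or_lt_of_le hph0 with h0' | h0'
    · simp [← h0']
      exact hRHS
    · have hπh0 : 0 < πh := lt_of_lt_of_le (mul_pos hc h0') h1
      have : (2 * 1 - 1) / (1 * πh + (1 - 1) * (1 - πh)) *
          ((δ * 1 * ph + (1 - 1) * (1 - ph)) / (δ * ph + 1 - ph))
          = (δ * ph) / (πh * (δ * ph + 1 - ph)) := by
        field_simp
        rw [div_eq_iff (ne_of_gt (by linarith))]
        ring
      rw [this, abs_of_nonneg (div_nonneg (by positivity)
        (le_of_lt (mul_pos hπh0 hDpos)))]
      rw [div_le_div_iff₀ (mul_pos hπh0 hDpos) (mul_pos hc hm0)]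
      nlinarith [mul_le_mul_of_nonneg_left
          (mul_le_mul h1 hD (le_of_lt hm0) (le_of_lt hπh0)) (le_of_lt hδpos),
        mul_le_mul_of_nonneg_right hδu (le_of_lt (mul_pos hπh0 hDpos)),
        mul_pos hπh0 hDpos]
end
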